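/- The space of stopped paths is Polish: On Υ := {(f, s) : s ≥ 0, f ∈ C[0,s]}, the function d_Υ defined for s ≤ t by d_Υ((f,s),(g,t)) := max(|t − s|, sup_{0≤u≤s}|f(u) − g(u)|, sup_{s≤u≤t}|g(u) − f(s)|) (and symmetrically for s ≥ t) is a metric, and the metric space (Υ, d_Υ) is complete and separable. -/

import Mathlib

open MeasureTheory ProbabilityTheory Filter Topology Set
open scoped ENNReal NNReal Classical

noncomputable section

/-- The space of continuous paths on `[0,∞)` started at `0`, modeled as continuous
functions on `ℝ` which vanish on `(-∞,0]`, endowed with the topology of locally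
uniform convergence and its Borel σ-algebra. -/
def PathSpace : Type := {ω : ℝ → ℝ // Continuous ω ∧ ∀ t ≤ 0, ω t = 0}

instance : TopologicalSpace PathSpace :=
  TopologicalSpace.induced (fun ω : PathSpace => (⟨ω.1, ω.2.1⟩ : C(ℝ, ℝ))) inferInstance

instance : MeasurableSpace PathSpace := borel PathSpace
instance : BorelSpace PathSpace := ⟨rfl⟩

namespace RF

/-- The coordinate (canonical) process. -/
def eval (t : ℝ) (ω : PathSpace) : ℝ := ω.1 t

/-- The natural (raw) filtration generated by the coordinate process. -/
def natFilt (t : ℝ) : MeasurableSpace PathSpace :=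
  ⨆ (s : ℝ) (_ : s ≤ t), MeasurableSpace.comap (eval s) inferInstance

/-- The path `ω` stopped at time `t`. -/
def stoppedPath (ω : PathSpace) (t : ℝ) : PathSpace :=
  ⟨fun s => ω.1 (min s t), ω.2.1.comp (continuous_id.min continuous_const),
    fun s hs => ω.2.2 _ (le_trans (min_le_left _ _) hs)⟩

/-- Concatenation: follow `ω` up to time `t`, then continue with the increments of `ω'`. -/
def concat (ω : PathSpace) (t : ℝ) (ω' : PathSpace) : PathSpace :=
  ⟨fun r => if r ≤ max t 0 then ω.1 r else ω.1 (max t 0) + ω'.1 (r - max t 0), by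
    constructor
    · refine Continuous.if_le ω.2.1 ?_ continuous_id continuous_const ?_
      · exact continuous_const.add (ω'.2.1.comp (continuous_id.sub continuous_const))
      · intro x hx; rw [hx, sub_self, ω'.2.2 0 le_rfl, add_zero]
    · intro r hr
      have h1 : r ≤ max t 0 := le_trans hr (le_max_right t 0)
      simp only [h1, if_true]
      exact ω.2.2 r hr⟩

/-- The "concatenation version" of the conditional expectation
`E_W[X | F_t](ω) = ∫ X((ω↾[0,t]) ⊕ ω') W(dω')`. -/
def condExpW (W : Measure PathSpace) (X : PathSpace → ℝ) (t : ℝ) (ω : PathSpace) : ℝ :=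
  ∫ ω', X (concat ω t ω') ∂W

/-- `W` is the Wiener measure: a probability measure under which the coordinate process
has independent centered Gaussian increments. -/
def IsWienerMeasure (W : Measure PathSpace) : Prop :=
  IsProbabilityMeasure W ∧
  (∀ s t : ℝ, 0 ≤ s → s ≤ t →
    Measure.map (fun ω => eval t ω - eval s ω) W = gaussianReal 0 ((t - s).toNNReal)) ∧
  (∀ (n : ℕ) (ts : ℕ → ℝ), (∀ i, 0 ≤ ts i) → Monotone ts →
    iIndepFun
      (fun i : Fin n => fun ω => eval (ts (i.1 + 1)) ω - eval (ts i.1) ω) W)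

/-- A simple trading strategy on the (infinite horizon) path space: a sequence of
strictly increasing stopping times `τ 0 = 0 < τ 1 < ⋯ → ∞` of the natural filtration
together with bounded position functions `F n` which depend on the path stopped at `τ n`. -/
structure SimpleStrategy where
  τ : ℕ → PathSpace → ℝ
  F : ℕ → PathSpace → ℝ
  tau_zero : ∀ ω, τ 0 ω = 0
  tau_lt : ∀ n ω, τ n ω < τ (n + 1) ω
  tau_tendsto : ∀ ω, Tendsto (fun n => τ n ω) atTop atTop
  tau_stopping : ∀ n t, MeasurableSet[natFilt t] {ω | τ n ω ≤ t}
  F_meas : ∀ n, @Measurable _ _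
    (MeasurableSpace.comap (fun ω => stoppedPath ω (τ n ω)) inferInstance) _ (F n)
  F_bdd : ∀ n, ∃ C, ∀ ω, |F n ω| ≤ C

/-- The capital process `(H ⬝ B)_t` of a simple strategy. -/
def capital (H : SimpleStrategy) (t : ℝ) (ω : PathSpace) : ℝ :=
  ∑' n, H.F n ω * (ω.1 (min (H.τ (n + 1) ω) t) - ω.1 (min (H.τ n ω) t))

/-- A simple trading strategy on the finite horizon `[0,T]`: the stopping times increase
to the terminal time `T`. -/
structure SimpleStrategyOn (T : ℝ) where
  τ : ℕ → PathSpace → ℝ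
  F : ℕ → PathSpace → ℝ
  tau_zero : ∀ ω, τ 0 ω = 0
  tau_lt : ∀ n ω, τ n ω < τ (n + 1) ω
  tau_tendsto : ∀ ω, Tendsto (fun n => τ n ω) atTop (𝓝 T)
  tau_stopping : ∀ n t, MeasurableSet[natFilt t] {ω | τ n ω ≤ t}
  F_meas : ∀ n, @Measurable _ _
    (MeasurableSpace.comap (fun ω => stoppedPath ω (τ n ω)) inferInstance) _ (F n)
  F_bdd : ∀ n, ∃ C, ∀ ω, |F n ω| ≤ C

/-- The capital process of a finite-horizon simple strategy. -/
def capitalOn {T : ℝ} (H : SimpleStrategyOn T) (t : ℝ) (ω : PathSpace) : ℝ :=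
  ∑' n, H.F n ω * (ω.1 (min (H.τ (n + 1) ω) t) - ω.1 (min (H.τ n ω) t))

/-- `x` lies on the dyadic grid `2^{-n} ℤ`. -/
def inDyadic (n : ℕ) (x : ℝ) : Prop := ∃ z : ℤ, x = (z : ℝ) * (2 : ℝ) ^ (-(n : ℤ))

/-- The stopping times `σ^n_k` of successive moves of `ω` across the dyadic grid `2^{-n}ℤ`
(with values in `[0,∞]`). -/
def sigmaTimes (ω : ℝ → ℝ) (n : ℕ) : ℕ → ℝ≥0∞
  | 0 => 0
  | k + 1 =>
    sInf (ENNReal.ofReal '' {u : ℝ | 0 ≤ u ∧ sigmaTimes ω n k ≤ ENNReal.ofReal u ∧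
      inDyadic n (ω u) ∧ ω u ≠ ω (sigmaTimes ω n k).toReal})

/-- The discrete quadratic variation `V^n_t(ω)` along the dyadic stopping times. -/
def discreteQV (ω : ℝ → ℝ) (n : ℕ) (t : ℝ) : ℝ :=
  ∑' k : ℕ, (ω (min (sigmaTimes ω n (k + 1)) (ENNReal.ofReal t)).toReal
      - ω (min (sigmaTimes ω n k) (ENNReal.ofReal t)).toReal) ^ 2

/-- `f` and `g` have the same intervals of constancy (on `[0,∞)`). -/
def SameConstancy (f g : ℝ → ℝ) : Prop :=
  ∀ u v : ℝ, 0 ≤ u → u ≤ v →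
    ((∀ x ∈ Icc u v, f x = f u) ↔ ∀ x ∈ Icc u v, g x = g u)

/-- `A` is the quadratic variation of `ω`: the discrete quadratic variations converge
locally uniformly to the continuous function `A`, which has the same intervals of
constancy as `ω`; moreover either `ω` converges at `∞` or `A` is unbounded. -/
def IsQVLimit (ω : ℝ → ℝ) (A : ℝ → ℝ) : Prop :=
  Continuous A ∧ TendstoLocallyUniformly (fun n => discreteQV ω n) A atTop ∧
  SameConstancy A ω ∧
  ((∃ L, Tendsto ω atTop (𝓝 L)) ∨ ¬ BddAbove (A '' Ici 0))

/-- `ω` admits a quadratic variation in the sense of Vovk. -/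
def IsQVPath (ω : PathSpace) : Prop := ∃ A, IsQVLimit ω.1 A

/-- `Ω^qv`, the set of paths admitting a quadratic variation. -/
def OmegaQV : Set PathSpace := {ω | IsQVPath ω}

/-- The quadratic variation `⟨ω⟩` of a path (junk value `0` off `Ω^qv`). -/
def qvOf (ω : PathSpace) : ℝ → ℝ :=
  if h : IsQVPath ω then h.choose else fun _ => 0

/-- `⟨ω⟩` as a Stieltjes function (junk value off the set where `⟨ω⟩` is monotone
and continuous). -/
def qvStieltjes (ω : PathSpace) : StieltjesFunction ℝ :=
  if h : Monotone (qvOf ω) ∧ Continuous (qvOf ω) then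
    { toFun := qvOf ω
      mono' := h.1
      right_continuous' := fun _ => h.2.continuousAt.continuousWithinAt }
  else
    { toFun := fun _ => 0
      mono' := monotone_const
      right_continuous' := fun _ => continuousWithinAt_const }

/-- `ζ^f_t(ω) = (1/2) ∫_0^t f''(ω_s) d⟨ω⟩_s`, the compensator of `f(ω)` in terms of the
pathwise quadratic variation. -/
def zetaQV (f : ℝ → ℝ) (ω : PathSpace) (t : ℝ) : ℝ :=
  (1 / 2) * ∫ s in Ioc (0 : ℝ) t, deriv (deriv f) (ω.1 s) ∂(qvStieltjes ω).measure

/-- `ζ^f_t(ω) = (1/2) ∫_0^t f''(ω_s) ds` (compensator under Wiener measure). -/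
def zetaLeb (f : ℝ → ℝ) (ω : PathSpace) (t : ℝ) : ℝ :=
  (1 / 2) * ∫ s in (0 : ℝ)..t, deriv (deriv f) (ω.1 s)

/-- `τ_t(ω) = inf{s ≥ 0 : ⟨ω⟩_s > t}` as a set. -/
def nttSet (ω : PathSpace) (t : ℝ) : Set ℝ := {s : ℝ | 0 ≤ s ∧ t < qvOf ω s}

/-- The normalizing time transformation `ntt(ω)_t = ω(τ_t(ω))`, with
`ω(∞) := lim_{s→∞} ω(s)` when `⟨ω⟩` is bounded. -/
def ntt (ω : PathSpace) (t : ℝ) : ℝ :=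
  if (nttSet ω t).Nonempty then ω.1 (sInf (nttSet ω t)) else limUnder atTop ω.1

/-- The normalizing time transformation as a map of the path space
(junk value for paths where `ntt ω` is not a continuous path). -/
def nttPath (ω : PathSpace) : PathSpace :=
  if h : Continuous (ntt ω) ∧ ∀ t ≤ 0, ntt ω t = 0 then ⟨ntt ω, h⟩
  else ⟨fun _ => 0, continuous_const, fun _ _ => rfl⟩

/-- `⟨ω⟩_∞ = ∞`, i.e. the quadratic variation is unbounded. -/
def QVUnbounded (ω : PathSpace) : Prop := ¬ BddAbove (qvOf ω '' Ici 0)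

/-- Vovk-type super-hedging outer expectation (with the modification of
Perkowski–Prömel): the minimal initial capital `λ > 0` such that some sequence of
`λ`-admissible simple strategies super-hedges `X` on `Ω^qv` in the sense of iterated
inferior limits. -/
def Ebar (X : PathSpace → EReal) : ℝ≥0∞ :=
  sInf {l : ℝ≥0∞ | ∃ lam : ℝ, 0 < lam ∧ l = ENNReal.ofReal lam ∧
    ∃ H : ℕ → SimpleStrategy,
      (∀ n (ω : PathSpace) (t : ℝ), ω ∈ OmegaQV → 0 ≤ t → -lam ≤ capital (H n) t ω) ∧
      ∀ ω ∈ OmegaQV, X ω ≤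
        liminf (fun t : ℝ =>
          liminf (fun n : ℕ => ((lam + capital (H n) t ω : ℝ) : EReal)) atTop) atTop}

/-- The outer measure `P̄`. -/
def Pbar (A : Set PathSpace) : ℝ≥0∞ := Ebar (A.indicator fun _ => (1 : EReal))

/-- Vovk's outer measure `Q̄`, defined through countable convex combinations of
admissible simple strategies. -/
def Qbar (A : Set PathSpace) : ℝ≥0∞ :=
  sInf {l : ℝ≥0∞ | ∃ lam : ℝ, 0 < lam ∧ l = ENNReal.ofReal lam ∧
    ∃ (lams : ℕ → ℝ) (H : ℕ → SimpleStrategy),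
      (∀ k, 0 < lams k) ∧ HasSum lams lam ∧
      (∀ k (ω : PathSpace) (t : ℝ), ω ∈ OmegaQV → 0 ≤ t → -(lams k) ≤ capital (H k) t ω) ∧
      ∀ ω ∈ OmegaQV,
        (A.indicator (fun _ => (1 : ℝ≥0∞)) ω) ≤
          liminf (fun t : ℝ => ∑' k, ENNReal.ofReal (lams k + capital (H k) t ω)) atTop}

/-- `C_qv[0,T]`: quadratic-variation paths on `[0,T]` (modeled as paths in `Ω^qv`
which are constant after time `T`). -/
def CQV (T : ℝ) : Set PathSpace := {ω | IsQVPath ω ∧ ∀ t, T ≤ t → ω.1 t = ω.1 T}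

/-- A martingale measure on `C_qv[0,T]`: a probability measure concentrated on
`C_qv[0,T]` under which the coordinate process is a martingale on `[0,T]` for the
natural filtration. -/
def IsMartingaleMeasureOn (T : ℝ) (P : Measure PathSpace) : Prop :=
  IsProbabilityMeasure P ∧ P (CQV T) = 1 ∧
  (∀ t, 0 ≤ t → t ≤ T → Integrable (eval t) P) ∧
  ∀ s t, 0 ≤ s → s ≤ t → t ≤ T → P[eval t | natFilt s] =ᵐ[P] eval s

/-- The (possibly infinite) expectation `E_P[f] ∈ [-∞,∞]` of a real functional. -/
def expE {Ω : Type*} [MeasurableSpace Ω] (P : Measure Ω) (f : Ω → ℝ) : EReal :=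
  ((∫⁻ ω, ENNReal.ofReal (f ω) ∂P : ℝ≥0∞) : EReal)
    - ((∫⁻ ω, ENNReal.ofReal (-(f ω)) ∂P : ℝ≥0∞) : EReal)

/-- The space `Υ` of stopped paths `(f,s)`, realized as pairs with `f` continuous,
constant on `(-∞,0]` and constant on `[s,∞)`. -/
def Upsilon : Set ((ℝ → ℝ) × ℝ) :=
  {p | Continuous p.1 ∧ 0 ≤ p.2 ∧ (∀ t ≤ 0, p.1 t = p.1 0) ∧
    ∀ t, p.2 ≤ t → p.1 t = p.1 p.2}

/-- The distance on stopped paths, assuming `s ≤ t`. -/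
def dUpAux (f : ℝ → ℝ) (s : ℝ) (g : ℝ → ℝ) (t : ℝ) : ℝ :=
  max (t - s) (max (⨆ u : Icc (0 : ℝ) s, |f u - g u|) (⨆ u : Icc s t, |g u - f s|))

/-- The metric `d_Υ` on the space of stopped paths. -/
def dUp (p q : (ℝ → ℝ) × ℝ) : ℝ :=
  if p.2 ≤ q.2 then dUpAux p.1 p.2 q.1 q.2 else dUpAux q.1 q.2 p.1 p.2

/-- The stopped path `(f(· ∧ s), s) ∈ Υ` (with clamping making it canonical). -/
def stoppedAtFun (f : ℝ → ℝ) (s : ℝ) : (ℝ → ℝ) × ℝ :=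
  (fun u => f (min (max u 0) (max s 0)), max s 0)

/-- `γ` is upper semicontinuous on `Υ` with respect to `d_Υ`. -/
def USCUpsilon (γ : (ℝ → ℝ) × ℝ → ℝ) : Prop :=
  ∀ p ∈ Upsilon, ∀ ε : ℝ, 0 < ε → ∃ δ : ℝ, 0 < δ ∧
    ∀ q ∈ Upsilon, dUp p q < δ → γ q < γ p + ε

/-- `τ` is a stopping time of the natural filtration. -/
def IsStoppingTimeN (τ : PathSpace → ℝ) : Prop :=
  ∀ t, MeasurableSet[natFilt t] {ω | τ ω ≤ t}

end RF
namespace RF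

section PolishAux
open BoundedContinuousFunction

/-- Clamping identity for elements of `Upsilon`. -/
lemma upsilon_clamp {p : (ℝ → ℝ) × ℝ} (hp : p ∈ Upsilon) (x : ℝ) :
    p.1 (min (max x 0) p.2) = p.1 x := by
  obtain ⟨hc, hs, h0, h1⟩ := hp
  rcases le_total x 0 with hx | hx
  · rw [max_eq_right hx, min_eq_left hs, h0 x hx]
  · rw [max_eq_left hx]
    rcases le_total x p.2 with hx2 | hx2
    · rw [min_eq_left hx2]
    · rw [min_eq_right hx2, h1 x hx2]

lemma upsilon_bddRange {p : (ℝ → ℝ) × ℝ} (hp : p ∈ Upsilon) :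
    ∃ C, ∀ x y, dist (p.1 x) (p.1 y) ≤ C := by
  have hcomp : IsCompact (p.1 '' Set.Icc 0 p.2) :=
    isCompact_Icc.image_of_continuousOn hp.1.continuousOn
  obtain ⟨C, hC⟩ := Metric.isBounded_iff.1 hcomp.isBounded
  have hmem : ∀ x : ℝ, p.1 x ∈ p.1 '' Set.Icc 0 p.2 := fun x =>
    ⟨min (max x 0) p.2, ⟨le_min (le_max_right x 0) hp.2.1, min_le_right _ _⟩,
      upsilon_clamp hp x⟩
  exact ⟨C, fun x y => hC (hmem x) (hmem y)⟩

/-- The path of a stopped path as a bounded continuous function. -/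
def upsilonBCF (p : ↥Upsilon) : ℝ →ᵇ ℝ :=
  ⟨⟨p.1.1, p.2.1⟩, upsilon_bddRange p.2⟩

@[simp] lemma upsilonBCF_apply (p : ↥Upsilon) (x : ℝ) : upsilonBCF p x = p.1.1 x := rfl

/-- The isometric embedding of `Upsilon` into `(ℝ →ᵇ ℝ) × ℝ`. -/
def upsilonEmb (p : ↥Upsilon) : (ℝ →ᵇ ℝ) × ℝ := (upsilonBCF p, p.1.2)

lemma upsilonEmb_inj : Function.Injective upsilonEmb := by
  intro p q h
  have h1 := congrArg (fun F : (ℝ →ᵇ ℝ) × ℝ => (F.1 : ℝ → ℝ)) h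
  have h2 := congrArg Prod.snd h
  exact Subtype.ext (Prod.ext h1 h2)

lemma upsilon_bcf_dist_eq (p q : ↥Upsilon) (h : p.1.2 ≤ q.1.2) :
    dist (upsilonBCF p) (upsilonBCF q) =
      max (⨆ u : Set.Icc (0:ℝ) p.1.2, |p.1.1 u - q.1.1 u|)
          (⨆ u : Set.Icc p.1.2 q.1.2, |q.1.1 u - p.1.1 p.1.2|) := by
  obtain ⟨pc, ps, p0, p1⟩ := p.2
  obtain ⟨qc, qs, q0, q1⟩ := q.2
  haveI : Nonempty (Set.Icc (0:ℝ) p.1.2) := Set.nonempty_Icc_subtype ps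
  haveI : Nonempty (Set.Icc p.1.2 q.1.2) := Set.nonempty_Icc_subtype h
  set D := dist (upsilonBCF p) (upsilonBCF q) with hD
  have hb1 : BddAbove (Set.range fun u : Set.Icc (0:ℝ) p.1.2 => |p.1.1 u - q.1.1 u|) := by
    refine ⟨D, ?_⟩
    rintro _ ⟨u, rfl⟩
    show |p.1.1 u - q.1.1 u| ≤ D
    rw [← Real.dist_eq]
    exact dist_coe_le_dist (f := upsilonBCF p) (g := upsilonBCF q) u
  have hb2 : BddAbove (Set.range fun u : Set.Icc p.1.2 q.1.2 => |q.1.1 u - p.1.1 p.1.2|) := by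
    refine ⟨D, ?_⟩
    rintro _ ⟨u, rfl⟩
    show |q.1.1 u - p.1.1 p.1.2| ≤ D
    have hfu : p.1.1 (u : ℝ) = p.1.1 p.1.2 := p1 u u.2.1
    rw [← hfu, abs_sub_comm, ← Real.dist_eq]
    exact dist_coe_le_dist (f := upsilonBCF p) (g := upsilonBCF q) u
  refine le_antisymm ?_ (max_le (ciSup_le fun u => ?_) (ciSup_le fun u => ?_))
  · have h00 : (0:ℝ) ≤ max (⨆ u : Set.Icc (0:ℝ) p.1.2, |p.1.1 u - q.1.1 u|)
          (⨆ u : Set.Icc p.1.2 q.1.2, |q.1.1 u - p.1.1 p.1.2|) := by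
      refine le_trans (abs_nonneg (p.1.1 0 - q.1.1 0)) (le_trans ?_ (le_max_left _ _))
      exact le_ciSup hb1 (⟨0, le_rfl, ps⟩ : Set.Icc (0:ℝ) p.1.2)
    refine (dist_le h00).2 fun x => ?_
    rw [Real.dist_eq]
    rcases le_total x p.1.2 with hx | hx
    · rcases le_total x 0 with h0x | h0x
      · have e1 : p.1.1 x = p.1.1 0 := p0 x h0x
        have e2 : q.1.1 x = q.1.1 0 := q0 x h0x
        rw [upsilonBCF_apply, upsilonBCF_apply, e1, e2]
        exact le_trans (le_ciSup hb1 (⟨0, le_rfl, ps⟩ : Set.Icc (0:ℝ) p.1.2))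
          (le_max_left _ _)
      · exact le_trans (le_ciSup hb1 (⟨x, h0x, hx⟩ : Set.Icc (0:ℝ) p.1.2)) (le_max_left _ _)
    · rcases le_total x q.1.2 with htx | htx
      · have e1 : p.1.1 x = p.1.1 p.1.2 := p1 x hx
        rw [upsilonBCF_apply, upsilonBCF_apply, e1, abs_sub_comm]
        exact le_trans (le_ciSup hb2 (⟨x, hx, htx⟩ : Set.Icc p.1.2 q.1.2)) (le_max_right _ _)
      · have e1 : p.1.1 x = p.1.1 p.1.2 := p1 x hx
        have e2 : q.1.1 x = q.1.1 q.1.2 := q1 x htx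
        rw [upsilonBCF_apply, upsilonBCF_apply, e1, e2, abs_sub_comm]
        exact le_trans (le_ciSup hb2 (⟨q.1.2, h, le_rfl⟩ : Set.Icc p.1.2 q.1.2))
          (le_max_right _ _)
  · rw [← Real.dist_eq]
    exact dist_coe_le_dist (f := upsilonBCF p) (g := upsilonBCF q) u
  · have hfu : p.1.1 (u : ℝ) = p.1.1 p.1.2 := p1 u u.2.1
    rw [← hfu, abs_sub_comm, ← Real.dist_eq]
    exact dist_coe_le_dist (f := upsilonBCF p) (g := upsilonBCF q) u

lemma upsilon_dUpAux_eq (p q : ↥Upsilon) (h : p.1.2 ≤ q.1.2) :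
    dUpAux p.1.1 p.1.2 q.1.1 q.1.2 =
      max (dist (upsilonBCF p) (upsilonBCF q)) (dist p.1.2 q.1.2) := by
  rw [upsilon_bcf_dist_eq p q h, Real.dist_eq, abs_of_nonpos (by linarith), neg_sub, dUpAux,
    max_comm]

/-- The canonical stopped path in `Upsilon` attached to a continuous function and a time. -/
def upsilonOf (f : C(ℝ, ℝ)) (s : ℝ) : ↥Upsilon := by
  refine ⟨stoppedAtFun f s, ?_, le_max_right s 0, ?_, ?_⟩
  · exact f.continuous.comp (((continuous_id.max continuous_const).min continuous_const))
  · intro t ht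
    show f (min (max t 0) (max s 0)) = f (min (max 0 0) (max s 0))
    rw [max_eq_right ht, max_self]
  · intro t ht
    have ht' : max s 0 ≤ t := ht
    show f (min (max t 0) (max s 0)) = f (min (max (max s 0) 0) (max s 0))
    rw [max_eq_left (le_trans (le_max_right s 0) ht'), min_eq_right ht',
      max_eq_left (le_max_right s 0), min_self]

lemma upsilonOf_surj : Function.Surjective (fun q : C(ℝ, ℝ) × ℝ => upsilonOf q.1 q.2) := by
  intro p
  refine ⟨(⟨p.1.1, p.2.1⟩, p.1.2), Subtype.ext (Prod.ext (funext fun x => ?_) ?_)⟩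
  · show p.1.1 (min (max x 0) (max p.1.2 0)) = p.1.1 x
    rw [max_eq_left p.2.2.1]
    exact upsilon_clamp p.2 x
  · exact max_eq_left p.2.2.1

end PolishAux

open BoundedContinuousFunction

/-- **The space of stopped paths is Polish**: `d_Υ` is a metric on `Υ` and the resulting
metric space is complete and separable. -/
theorem upsilon_polish :
    ∃ m : MetricSpace ↥Upsilon,
      (∀ x y : ↥Upsilon, @dist _ m.toPseudoMetricSpace.toDist x y = dUp x.1 y.1) ∧
      @CompleteSpace ↥Upsilon m.toUniformSpace ∧
      @TopologicalSpace.SeparableSpace ↥Upsilon m.toUniformSpace.toTopologicalSpace := by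
  letI m : MetricSpace ↥Upsilon := MetricSpace.induced upsilonEmb upsilonEmb_inj inferInstance
  letI u : UniformSpace ↥Upsilon := m.toUniformSpace
  letI tt : TopologicalSpace ↥Upsilon := u.toTopologicalSpace
  have hiso : Isometry upsilonEmb := Isometry.of_dist_eq fun x y => rfl
  refine ⟨m, ?_, ?_, ?_⟩
  · intro x y
    have hd : dist x y =
        max (dist (upsilonBCF x) (upsilonBCF y)) (dist x.1.2 y.1.2) := by
      show dist (upsilonEmb x) (upsilonEmb y) = _
      rw [Prod.dist_eq]; rfl
    rw [hd, dUp]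
    split_ifs with hc
    · exact (upsilon_dUpAux_eq x y hc).symm
    · rw [upsilon_dUpAux_eq y x (le_of_not_ge hc),
        dist_comm (upsilonBCF y) (upsilonBCF x),
        dist_comm (y : (ℝ → ℝ) × ℝ).2 (x : (ℝ → ℝ) × ℝ).2]
  · -- completeness
    refine (completeSpace_iff_isComplete_range hiso.isUniformInducing).2 ?_
    have hrange : Set.range upsilonEmb =
        {q : (ℝ →ᵇ ℝ) × ℝ | 0 ≤ q.2 ∧ (∀ x ≤ 0, q.1 x = q.1 0) ∧
          ∀ x, q.2 ≤ x → q.1 x = q.1 q.2} := by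
      ext q
      constructor
      · rintro ⟨p, rfl⟩
        obtain ⟨hc, hs, h0, h1⟩ := p.2
        exact ⟨hs, h0, h1⟩
      · rintro ⟨hs, h0, h1⟩
        exact ⟨⟨(⇑q.1, q.2), q.1.continuous, hs, h0, h1⟩,
          Prod.ext (BoundedContinuousFunction.ext fun x => rfl) rfl⟩
    rw [hrange]
    refine IsClosed.isComplete ?_
    have hset : {q : (ℝ →ᵇ ℝ) × ℝ | 0 ≤ q.2 ∧ (∀ x ≤ 0, q.1 x = q.1 0) ∧
          ∀ x, q.2 ≤ x → q.1 x = q.1 q.2} =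
        ((fun q : (ℝ →ᵇ ℝ) × ℝ => q.2) ⁻¹' Set.Ici 0) ∩
          ((⋂ x ∈ Set.Iic (0:ℝ), {q : (ℝ →ᵇ ℝ) × ℝ | q.1 x = q.1 0}) ∩
            ⋂ x : ℝ, {q : (ℝ →ᵇ ℝ) × ℝ | q.1 (max x q.2) = q.1 q.2}) := by
      ext q
      simp only [Set.mem_setOf_eq, Set.mem_inter_iff, Set.mem_preimage, Set.mem_Ici,
        Set.mem_iInter, Set.mem_Iic]
      refine and_congr_right fun _ => and_congr_right fun _ => ?_
      constructor
      · exact fun hq x => hq _ (le_max_right x q.2)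
      · intro hq x hx
        have := hq x
        rwa [max_eq_left hx] at this
    rw [hset]
    have hev : Continuous fun q : (ℝ →ᵇ ℝ) × ℝ => q.1 q.2 :=
      continuous_eval
    refine (isClosed_Ici.preimage continuous_snd).inter (IsClosed.inter ?_ ?_)
    · refine isClosed_biInter fun x hx => isClosed_eq ?_ ?_
      · exact (continuous_eval_const _).comp continuous_fst
      · exact (continuous_eval_const _).comp continuous_fst
    · refine isClosed_iInter fun x => isClosed_eq ?_ hev
      exact hev.comp
        (continuous_fst.prodMk (continuous_const.max continuous_snd))
  · -- separability
    have hcont : Continuous fun q : C(ℝ, ℝ) × ℝ => upsilonOf q.1 q.2 := by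
      rw [continuous_iff_continuousAt]
      rintro ⟨f₀, s₀⟩
      rw [ContinuousAt, Metric.tendsto_nhds]
      intro ε hε
      set T : ℝ := max s₀ 0 + 1 with hTdef
      obtain ⟨δ, hδ, hδ'⟩ := Metric.uniformContinuousOn_iff.1
        ((isCompact_Icc (a := (0:ℝ)) (b := T)).uniformContinuousOn_of_continuous
          f₀.continuous.continuousOn) (ε/2) (half_pos hε)
      set r : ℝ := min δ (min 1 (ε/2)) with hrdef
      have hr : 0 < r := lt_min hδ (lt_min one_pos (half_pos hε))
      have h1 : ∀ᶠ q : C(ℝ, ℝ) × ℝ in 𝓝 (f₀, s₀), dist q.2 s₀ < r :=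
        Metric.tendsto_nhds.1 (continuous_snd.tendsto (f₀, s₀)) r hr
      have h2 : ∀ᶠ q : C(ℝ, ℝ) × ℝ in 𝓝 (f₀, s₀),
          dist (q.1.restrict (Set.Icc 0 T)) (f₀.restrict (Set.Icc 0 T)) < ε/2 :=
        Metric.tendsto_nhds.1
          (((ContinuousMap.continuous_restrict (Set.Icc (0:ℝ) T)).comp
            continuous_fst).tendsto (f₀, s₀)) (ε/2) (half_pos hε)
      filter_upwards [h1, h2] with q hq1 hq2
      have habs : |q.2 - s₀| < r := by rwa [Real.dist_eq] at hq1
      have hmaxabs : |max q.2 0 - max s₀ 0| ≤ |q.2 - s₀| := abs_max_sub_max_le_abs q.2 s₀ 0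
      have hr1 : r ≤ 1 := le_trans (min_le_right _ _) (min_le_left _ _)
      have hrε : r ≤ ε/2 := le_trans (min_le_right _ _) (min_le_right _ _)
      have hrδ : r ≤ δ := min_le_left _ _
      have hTle : max q.2 0 ≤ T := by
        have := le_abs_self (max q.2 0 - max s₀ 0)
        have := hmaxabs
        simp only [hTdef]
        linarith
      have hs₀T : max s₀ 0 ≤ T := by simp only [hTdef]; linarith
      have hdq : dist (upsilonOf q.1 q.2) (upsilonOf f₀ s₀) =
          max (dist (upsilonBCF (upsilonOf q.1 q.2)) (upsilonBCF (upsilonOf f₀ s₀)))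
            (dist (max q.2 0) (max s₀ 0)) := by
        show dist (upsilonEmb _) (upsilonEmb _) = _
        rw [Prod.dist_eq]; rfl
      rw [hdq]
      refine max_lt ?_ ?_
      · have hle : dist (upsilonBCF (upsilonOf q.1 q.2)) (upsilonBCF (upsilonOf f₀ s₀)) ≤
            dist (q.1.restrict (Set.Icc 0 T)) (f₀.restrict (Set.Icc 0 T)) + ε/2 := by
          refine (BoundedContinuousFunction.dist_le
            (add_nonneg dist_nonneg (le_of_lt (half_pos hε)))).2 fun x => ?_
          set a : ℝ := min (max x 0) (max q.2 0) with hadef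
          set b : ℝ := min (max x 0) (max s₀ 0) with hbdef
          have ha : a ∈ Set.Icc (0:ℝ) T :=
            ⟨le_min (le_max_right x 0) (le_max_right q.2 0),
              le_trans (min_le_right _ _) hTle⟩
          have hb : b ∈ Set.Icc (0:ℝ) T :=
            ⟨le_min (le_max_right x 0) (le_max_right s₀ 0),
              le_trans (min_le_right _ _) hs₀T⟩
          have hab : |a - b| < δ := by
            have h := abs_min_sub_min_le_max (max x 0) (max q.2 0) (max x 0) (max s₀ 0)
            rw [sub_self, abs_zero, max_eq_right (abs_nonneg (max q.2 0 - max s₀ 0))] at h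
            calc |a - b| ≤ |max q.2 0 - max s₀ 0| := h
              _ ≤ |q.2 - s₀| := hmaxabs
              _ < r := habs
              _ ≤ δ := hrδ
          have hstep : dist ((upsilonBCF (upsilonOf q.1 q.2)) x)
              ((upsilonBCF (upsilonOf f₀ s₀)) x) ≤
              dist (q.1 a) (f₀ a) + dist (f₀ a) (f₀ b) := by
            have : (upsilonBCF (upsilonOf q.1 q.2)) x = q.1 a := rfl
            have h2' : (upsilonBCF (upsilonOf f₀ s₀)) x = f₀ b := rfl
            rw [this, h2']
            exact dist_triangle _ _ _
          refine le_trans hstep (add_le_add ?_ (le_of_lt (hδ' a ha b hb hab)))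
          have : dist (q.1 a) (f₀ a) =
              dist ((q.1.restrict (Set.Icc 0 T)) ⟨a, ha⟩)
                ((f₀.restrict (Set.Icc 0 T)) ⟨a, ha⟩) := rfl
          rw [this]
          exact ContinuousMap.dist_apply_le_dist _
        calc dist (upsilonBCF (upsilonOf q.1 q.2)) (upsilonBCF (upsilonOf f₀ s₀)) ≤
            dist (q.1.restrict (Set.Icc 0 T)) (f₀.restrict (Set.Icc 0 T)) + ε/2 := hle
          _ < ε/2 + ε/2 := by linarith
          _ = ε := add_halves ε
      · rw [Real.dist_eq]
        calc |max q.2 0 - max s₀ 0| ≤ |q.2 - s₀| := hmaxabs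
          _ < r := habs
          _ ≤ ε := le_trans hrε (by linarith)
    exact (upsilonOf_surj.denseRange).separableSpace hcont

end RF
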